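/- Let M be a compact metric space and suppose the entropy map H takes at least two distinct values on F(M) (i.e., there exist non-autonomous dynamical systems f, g on M with H(f) ≠ H(g)). Then H : (F(M), τ_prod) → [0,∞] is discontinuous at every point of F(M). -/

import Mathlib

open Filter Topology Set

variable {M : Type*} {N : Type*}

/-- The `n`-th composition `f_i^n = f_{i+n-1} ∘ ⋯ ∘ f_i` of a non-autonomous
dynamical system `f = (f_i)_{i ∈ ℤ}` of homeomorphisms of `M`. -/
def nsIter [TopologicalSpace M] (f : ℤ → M ≃ₜ M) (i : ℤ) : ℕ → M → M
  | 0 => id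
  | n + 1 => (f (i + n)) ∘ nsIter f i n

/-- `K` is an `(n, ε)`-spanning set for `f` at time `i`. -/
def IsSpanningSet [PseudoMetricSpace M] (f : ℤ → M ≃ₜ M) (i : ℤ) (n : ℕ) (ε : ℝ)
    (K : Set M) : Prop :=
  ∀ x : M, ∃ y ∈ K, ∀ j < n, dist (nsIter f i j x) (nsIter f i j y) < ε

/-- `E` is an `(n, ε)`-separated set for `f` at time `i`. -/
def IsSeparatedSet [PseudoMetricSpace M] (f : ℤ → M ≃ₜ M) (i : ℤ) (n : ℕ) (ε : ℝ)
    (E : Set M) : Prop :=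
  ∀ x ∈ E, ∀ y ∈ E, x ≠ y → ∃ j < n, ε < dist (nsIter f i j x) (nsIter f i j y)

/-- `r[n,i](ε,f)`: the smallest cardinality of a finite `(n, ε)`-spanning set at time `i`. -/
noncomputable def rSpan [PseudoMetricSpace M] (f : ℤ → M ≃ₜ M) (i : ℤ) (n : ℕ) (ε : ℝ) : ℕ :=
  sInf {k | ∃ K : Finset M, K.card = k ∧ IsSpanningSet f i n ε ↑K}

/-- `s[n,i](ε,f)`: the largest cardinality of an `(n, ε)`-separated set at time `i`. -/
noncomputable def sSep [PseudoMetricSpace M] (f : ℤ → M ≃ₜ M) (i : ℤ) (n : ℕ) (ε : ℝ) : ℕ :=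
  sSup {k | ∃ E : Finset M, E.card = k ∧ IsSeparatedSet f i n ε ↑E}

/-- `r[i](ε,f) = limsup_{n → ∞} (1/n) log r[n,i](ε,f)`. -/
noncomputable def rGrowth [PseudoMetricSpace M] (f : ℤ → M ≃ₜ M) (i : ℤ) (ε : ℝ) : EReal :=
  Filter.atTop.limsup fun n : ℕ => ((Real.log (rSpan f i n ε) / n : ℝ) : EReal)

/-- `s[i](ε,f) = limsup_{n → ∞} (1/n) log s[n,i](ε,f)`. -/
noncomputable def sGrowth [PseudoMetricSpace M] (f : ℤ → M ≃ₜ M) (i : ℤ) (ε : ℝ) : EReal :=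
  Filter.atTop.limsup fun n : ℕ => ((Real.log (sSep f i n ε) / n : ℝ) : EReal)

/-- The topological entropy `H_i(f) = lim_{ε → 0⁺} r[i](ε,f)`; since `ε ↦ r[i](ε,f)` is
antitone, this one-sided limit equals the supremum over `ε > 0`. -/
noncomputable def nsEntropy [PseudoMetricSpace M] (f : ℤ → M ≃ₜ M) (i : ℤ) : EReal :=
  ⨆ (ε : ℝ) (_ : 0 < ε), rGrowth f i ε

/-- The metric `d⁰(φ,ψ) = sup_x d(φ x, ψ x) + sup_x d(φ⁻¹ x, ψ⁻¹ x)` on the homeomorphisms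
of a compact metric space `M`. -/
noncomputable def dHomeo [PseudoMetricSpace M] (φ ψ : M ≃ₜ M) : ℝ :=
  (⨆ x : M, dist (φ x) (ψ x)) + ⨆ x : M, dist (φ.symm x) (ψ.symm x)

/-- The topology of the metric `d⁰` on `Homeo(M)`, generated by the `d⁰`-balls. -/
noncomputable def homeoTop (M : Type*) [PseudoMetricSpace M] : TopologicalSpace (M ≃ₜ M) :=
  .generateFrom {B | ∃ (φ : M ≃ₜ M) (ε : ℝ), 0 < ε ∧ B = {ψ : M ≃ₜ M | dHomeo φ ψ < ε}}

/-- The product topology `τ_prod` on `F(M) = ∏_{i ∈ ℤ} Homeo(M)`. -/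
noncomputable def prodTop (M : Type*) [PseudoMetricSpace M] :
    TopologicalSpace (ℤ → M ≃ₜ M) :=
  @Pi.topologicalSpace ℤ (fun _ => M ≃ₜ M) (fun _ => homeoTop M)

/-- The strong topology `τ_str` on `F(M)`, generated by the strong basic neighborhoods
`B(f,ε) = {g : d⁰(f_i, g_i) < ε_i for all i}` over all `f` and all sequences of positive
reals `(ε_i)_{i ∈ ℤ}`. -/
noncomputable def strongTop (M : Type*) [PseudoMetricSpace M] :
    TopologicalSpace (ℤ → M ≃ₜ M) :=
  .generateFrom {B | ∃ (f : ℤ → M ≃ₜ M) (ε : ℤ → ℝ), (∀ i : ℤ, 0 < ε i) ∧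
    B = {g : ℤ → M ≃ₜ M | ∀ i : ℤ, dHomeo (f i) (g i) < ε i}}

/-- `CF(M)`: the set of constant families in `F(M)`. -/
def CF (M : Type*) [TopologicalSpace M] : Set (ℤ → M ≃ₜ M) :=
  {f | ∃ φ : M ≃ₜ M, f = fun _ : ℤ => φ}

/-!
The entropy of a non-autonomous system depends only on its tail: if `f` and `g` agree from
time `N` on, then `g_0^j = f_0^j ∘ T` for all `j ≥ N`, where `T = (f_0^N)⁻¹ ∘ g_0^N`, so `T⁻¹`
maps `(n, δ)`-spanning sets of `f` to `(n, ε)`-spanning sets of `g` as soon as `δ ≤ ε` and `δ`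
controls the finitely many uniformly continuous maps `g_0^j ∘ T⁻¹`, `j < N`.

A neighbourhood in the product topology constrains only finitely many coordinates, so the
systems that agree with `f` before time `N` and with a given `h` afterwards converge to `f` as
`N → ∞`, while all of them have the entropy of `h`. Continuity at `f` would force
`H(h) = H(f)` for every `h`, i.e. a constant entropy map.
-/

theorem Real.log_natCast_le_log_natCast {a b : ℕ} (hab : a ≤ b) : Real.log a ≤ Real.log b := by
  rcases Nat.eq_zero_or_pos a with rfl | ha
  · simpa using Real.log_natCast_nonneg b
  · exact Real.log_le_log (by exact_mod_cast ha) (by exact_mod_cast hab)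

section NsIter

variable [TopologicalSpace M] (f : ℤ → M ≃ₜ M) (i : ℤ)

def nsIterHomeomorph : ℕ → M ≃ₜ M
  | 0 => Homeomorph.refl M
  | n + 1 => (nsIterHomeomorph n).trans (f (i + n))

theorem coe_nsIterHomeomorph (n : ℕ) : ⇑(nsIterHomeomorph f i n) = nsIter f i n := by
  induction n with
  | zero => rfl
  | succ n ih => funext x; simp only [nsIterHomeomorph, Homeomorph.trans_apply, ih]; rfl

theorem continuous_nsIter (n : ℕ) : Continuous (nsIter f i n) :=
  coe_nsIterHomeomorph f i n ▸ (nsIterHomeomorph f i n).continuous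

theorem nsIter_add (a b : ℕ) (x : M) :
    nsIter f i (a + b) x = nsIter f (i + a) b (nsIter f i a x) := by
  induction b with
  | zero => rfl
  | succ b ih =>
    rw [← Nat.add_assoc, nsIter, nsIter, Function.comp_apply, Function.comp_apply, ih]
    congr 2
    push_cast
    ring

theorem nsIter_congr {g : ℤ → M ≃ₜ M} {n : ℕ} (hfg : ∀ k < n, f (i + k) = g (i + k)) :
    nsIter f i n = nsIter g i n := by
  induction n with
  | zero => rfl
  | succ n ih =>
    simp only [nsIter, hfg n n.lt_succ_self, ih fun k hk => hfg k (hk.trans n.lt_succ_self)]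

variable {f i}

theorem exists_nsIter_eq_comp_of_tail {g : ℤ → M ≃ₜ M} {N : ℕ}
    (hfg : ∀ k : ℕ, N ≤ k → f (i + k) = g (i + k)) :
    ∃ T : M ≃ₜ M, ∀ j, N ≤ j → nsIter g i j = nsIter f i j ∘ T := by
  set T := (nsIterHomeomorph g i N).trans (nsIterHomeomorph f i N).symm
  refine ⟨T, fun j hj => ?_⟩
  obtain ⟨m, rfl⟩ := Nat.exists_eq_add_of_le hj
  have hT : ∀ x, nsIter f i N (T x) = nsIter g i N x := fun x => by
    simp [T, ← coe_nsIterHomeomorph]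
  have htail : nsIter g (i + N) m = nsIter f (i + N) m :=
    nsIter_congr g (i + N) fun k _ => by
      simpa [add_assoc] using (hfg (N + k) (Nat.le_add_right N k)).symm
  funext x
  rw [Function.comp_apply, nsIter_add, nsIter_add, htail, hT]

end NsIter

section Span

variable [PseudoMetricSpace M] (f : ℤ → M ≃ₜ M) (i : ℤ) (n : ℕ) {ε : ℝ}

theorem exists_finset_isSpanningSet [CompactSpace M] (hε : 0 < ε) :
    ∃ K : Finset M, IsSpanningSet f i n ε K := by
  obtain ⟨K, hK⟩ := isCompact_univ.elim_finite_subcover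
    (fun y => ⋂ j ∈ Finset.range n, nsIter f i j ⁻¹' Metric.ball (nsIter f i j y) ε)
    (fun y => isOpen_biInter_finset fun j _ =>
      (continuous_nsIter f i j).isOpen_preimage _ Metric.isOpen_ball)
    (fun x _ => by exact mem_iUnion.mpr ⟨x, by simp [hε]⟩)
  refine ⟨K, fun x => ?_⟩
  obtain ⟨y, hyK, hy⟩ := mem_iUnion₂.mp (hK (mem_univ x))
  exact ⟨y, hyK, fun j hj => by simpa using mem_iInter₂.mp hy j (Finset.mem_range.mpr hj)⟩

theorem exists_card_eq_rSpan [CompactSpace M] (hε : 0 < ε) :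
    ∃ K : Finset M, K.card = rSpan f i n ε ∧ IsSpanningSet f i n ε K := by
  obtain ⟨K, hK⟩ := exists_finset_isSpanningSet f i n hε
  exact Nat.sInf_mem (s := {k | ∃ K : Finset M, K.card = k ∧ IsSpanningSet f i n ε K})
    ⟨K.card, K, rfl, hK⟩

variable {f i n}

theorem rSpan_le_card {K : Finset M} (hK : IsSpanningSet f i n ε K) : rSpan f i n ε ≤ K.card :=
  Nat.sInf_le ⟨K, rfl, hK⟩

theorem rGrowth_le_of_rSpan_le {g : ℤ → M ≃ₜ M} {i' : ℤ} {δ : ℝ}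
    (h : ∀ n, rSpan g i' n ε ≤ rSpan f i n δ) : rGrowth g i' ε ≤ rGrowth f i δ :=
  limsup_le_limsup <| Eventually.of_forall fun n => EReal.coe_le_coe_iff.mpr <|
    div_le_div_of_nonneg_right (Real.log_natCast_le_log_natCast (h n)) n.cast_nonneg

theorem exists_isSpanningSet_image_of_tail [CompactSpace M] {g : ℤ → M ≃ₜ M} {N : ℕ}
    (hfg : ∀ k : ℕ, N ≤ k → f (i + k) = g (i + k)) (hε : 0 < ε) :
    ∃ δ > 0, ∃ S : M ≃ₜ M,
      ∀ n K, IsSpanningSet f i n δ K → IsSpanningSet g i n ε (S '' K) := by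
  obtain ⟨T, hT⟩ := exists_nsIter_eq_comp_of_tail hfg
  have hunif : UniformContinuous fun z (j : Fin N) => nsIter g i j (T.symm z) :=
    CompactSpace.uniformContinuous_of_continuous <| continuous_pi fun j =>
      (continuous_nsIter g i j).comp T.symm.continuous
  obtain ⟨δ, hδ, hδε⟩ := Metric.uniformContinuous_iff.mp hunif ε hε
  refine ⟨min δ ε, lt_min hδ hε, T.symm, fun n K hK x => ?_⟩
  obtain ⟨y, hyK, hy⟩ := hK (T x)
  refine ⟨T.symm y, mem_image_of_mem _ hyK, fun j hjn => ?_⟩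
  rcases lt_or_ge j N with hjN | hNj
  · -- before time `N`, closeness at time `j` is inherited from closeness at time `0`
    have h0 : dist (T x) y < δ := (hy 0 (by omega)).trans_le (min_le_left _ _)
    simpa using (dist_pi_lt_iff hε).mp (hδε h0) ⟨j, hjN⟩
  · rw [hT j hNj, Function.comp_apply, Function.comp_apply, T.apply_symm_apply]
    exact (hy j hjn).trans_le (min_le_right _ _)

end Span

section Entropy

variable [PseudoMetricSpace M] [CompactSpace M] {f g : ℤ → M ≃ₜ M} {i : ℤ} {N : ℕ}

theorem exists_rSpan_le_of_tail (hfg : ∀ k : ℕ, N ≤ k → f (i + k) = g (i + k)) {ε : ℝ}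
    (hε : 0 < ε) : ∃ δ > 0, ∀ n, rSpan g i n ε ≤ rSpan f i n δ := by
  classical
  obtain ⟨δ, hδ, S, hS⟩ := exists_isSpanningSet_image_of_tail hfg hε
  refine ⟨δ, hδ, fun n => ?_⟩
  obtain ⟨K, hKcard, hK⟩ := exists_card_eq_rSpan f i n hδ
  calc rSpan g i n ε ≤ (K.image S).card :=
        rSpan_le_card (by rw [Finset.coe_image]; exact hS n K hK)
    _ ≤ K.card := Finset.card_image_le
    _ = rSpan f i n δ := hKcard

theorem nsEntropy_le_of_tail (hfg : ∀ k : ℕ, N ≤ k → f (i + k) = g (i + k)) :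
    nsEntropy g i ≤ nsEntropy f i :=
  iSup₂_le fun ε hε => by
    obtain ⟨δ, hδ, hle⟩ := exists_rSpan_le_of_tail hfg hε
    exact (rGrowth_le_of_rSpan_le hle).trans
      (le_iSup₂ (f := fun δ (_ : 0 < δ) => rGrowth f i δ) δ hδ)

theorem nsEntropy_eq_of_tail (hfg : ∀ k : ℕ, N ≤ k → f (i + k) = g (i + k)) :
    nsEntropy f i = nsEntropy g i :=
  le_antisymm (nsEntropy_le_of_tail fun k hk => (hfg k hk).symm) (nsEntropy_le_of_tail hfg)

end Entropy

theorem tendsto_ite_lt_natCast_nhds {X : ℤ → Type*} [∀ i, TopologicalSpace (X i)]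
    (x y : ∀ i, X i) :
    Tendsto (fun N : ℕ => fun i => if i < (N : ℤ) then x i else y i) atTop (𝓝 x) :=
  tendsto_pi_nhds.2 fun i => tendsto_const_nhds.congr' <|
    (tendsto_natCast_atTop_atTop.eventually_gt_atTop i).mono fun _ hN => (if_pos hN).symm

/-- if the entropy map `H` takes at least two distinct values on `F(M)`
(`M` a compact metric space), then `H : (F(M), τ_prod) → [0,∞]` is discontinuous at every
point of `F(M)`. (Recall `H_i(f)` is independent of `i`; `H(f) = H_0(f)` is the common
value.) -/
theorem nsEntropy_discontinuous_prodTop [MetricSpace M] [CompactSpace M]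
    (hH : ∃ f g : ℤ → M ≃ₜ M, nsEntropy f 0 ≠ nsEntropy g 0) :
    ∀ f : ℤ → M ≃ₜ M,
      ¬ @ContinuousAt (ℤ → M ≃ₜ M) EReal (prodTop M) inferInstance
        (fun g : ℤ → M ≃ₜ M => nsEntropy g 0) f := by
  intro f₀ hcont
  let _ : TopologicalSpace (M ≃ₜ M) := homeoTop M
  have hconst (h : ℤ → M ≃ₜ M) : nsEntropy h 0 = nsEntropy f₀ 0 :=
    tendsto_nhds_unique
      (tendsto_const_nhds.congr fun N =>
        nsEntropy_eq_of_tail (N := N) fun k hk => (if_neg (by omega)).symm)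
      (hcont.tendsto.comp (tendsto_ite_lt_natCast_nhds f₀ h))
  obtain ⟨f, g, hfg⟩ := hH
  exact hfg ((hconst f).trans (hconst g).symm)
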